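/- Let T and T* be prefix-closed subtrees of the same size N with T ≠ T*, where T* = {i_1,...,i_N} is enumerated in non-increasing score order by best-first expansion. Then there exists a prefix-closed subtree T' of size N with score sum Σρ(T') ≥ Σρ(T) and strictly smaller symmetric difference with T*. -/

import Mathlib

/-- A candidate lattice: a rooted tree with multiplicative path scores, where each
node multiplies its parent's score by a weight in [0,1], and the root has score 1. -/
structure ScoreTree (σ : Type) where
  root : σ
  parent : σ → σ
  depth : σ → ℕ
  weight : σ → ℝ
  score : σ → ℝ
  parent_root : parent root = root
  depth_root : depth root = 0
  depth_node : ∀ i, i ≠ root → depth i = depth (parent i) + 1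
  weight_nonneg : ∀ i, 0 ≤ weight i
  weight_le_one : ∀ i, weight i ≤ 1
  score_root : score root = 1
  score_node : ∀ i, i ≠ root → score i = score (parent i) * weight i

/-!
Exchange argument. A deepest node `y` of `S \ T*` is a leaf of `S`: a child of `y` in `S` lies
outside `T*`, since `T*` is closed under parents, and is deeper. Removing `y` leaves a subtree
`S'`. Let `z` be the first best-first node missing from `S'`; its parent was selected earlier, so
`S' ∪ {z}` is a subtree. Any node outside `S'`, in particular `y`, has score at most that of its
ancestor on the frontier of the nodes selected before `z` (scores decrease along paths), which by
the best-first rule is at most the score of `z`. Since `y ∈ S \ T*` and `z ∈ T* \ S`, the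
exchange shrinks the symmetric difference by two.
-/

open Finset
open scoped symmDiff

namespace Finset
variable {α : Type*} [DecidableEq α]

theorem insert_erase_symmDiff {s t : Finset α} {y z : α} (hy : y ∈ s \ t) (hz : z ∈ t \ s) :
    insert z (s.erase y) ∆ t = ((s ∆ t).erase y).erase z := by
  rw [mem_sdiff] at hy hz
  ext x
  simp only [mem_symmDiff, mem_insert, mem_erase]
  by_cases hxy : x = y <;> by_cases hxz : x = z <;> simp_all

theorem card_insert_erase_symmDiff_lt {s t : Finset α} {y z : α} (hy : y ∈ s \ t)
    (hz : z ∈ t \ s) : #(insert z (s.erase y) ∆ t) < #(s ∆ t) := by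
  rw [insert_erase_symmDiff hy hz]
  have hy' : y ∈ s ∆ t := mem_symmDiff.2 (Or.inl (mem_sdiff.1 hy))
  have hz' : z ∈ (s ∆ t).erase y :=
    mem_erase.2 ⟨fun h => (mem_sdiff.1 hy).2 (h ▸ (mem_sdiff.1 hz).1),
      mem_symmDiff.2 (Or.inr (mem_sdiff.1 hz))⟩
  exact (card_erase_lt_of_mem hz').trans (card_erase_lt_of_mem hy')

end Finset

namespace ScoreTree

variable {σ : Type} (T : ScoreTree σ)

theorem induction_on {motive : σ → Prop} (root : motive T.root)
    (parent : ∀ i, i ≠ T.root → motive (T.parent i) → motive i) (i : σ) : motive i := by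
  induction hd : T.depth i using Nat.strong_induction_on generalizing i with
  | _ d ih =>
    by_cases hi : i = T.root
    · exact hi ▸ root
    · exact parent i hi (ih _ (by rw [← hd, T.depth_node i hi]; omega) _ rfl)

theorem score_nonneg (i : σ) : 0 ≤ T.score i := by
  induction i using T.induction_on with
  | root => rw [T.score_root]; exact zero_le_one
  | parent i hi ih => rw [T.score_node i hi]; exact mul_nonneg ih (T.weight_nonneg i)

theorem score_le_score_parent {i : σ} (hi : i ≠ T.root) : T.score i ≤ T.score (T.parent i) := by
  rw [T.score_node i hi]
  exact mul_le_of_le_one_right (T.score_nonneg _) (T.weight_le_one i)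

theorem exists_score_le_of_notMem {s : Set σ} (hs : T.root ∈ s) {j : σ} (hj : j ∉ s) :
    ∃ a ∉ s, T.parent a ∈ s ∧ T.score j ≤ T.score a := by
  induction j using T.induction_on with
  | root => exact absurd hs hj
  | parent i hi ih =>
    by_cases hp : T.parent i ∈ s
    · exact ⟨i, hj, hp, le_rfl⟩
    · obtain ⟨a, ha, hpa, hscore⟩ := ih hp
      exact ⟨a, ha, hpa, (T.score_le_score_parent hi).trans hscore⟩

def IsSubtree (S : Finset σ) : Prop := T.root ∈ S ∧ ∀ i ∈ S, T.parent i ∈ S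

variable {T}

theorem IsSubtree.insert [DecidableEq σ] {S : Finset σ} (hS : T.IsSubtree S) {z : σ}
    (hz : T.parent z ∈ S) : T.IsSubtree (insert z S) := by
  refine ⟨mem_insert_of_mem hS.1, fun i hi => mem_insert_of_mem ?_⟩
  rcases mem_insert.1 hi with rfl | hi
  exacts [hz, hS.2 i hi]

theorem IsSubtree.erase [DecidableEq σ] {S : Finset σ} (hS : T.IsSubtree S) {y : σ}
    (hy : y ≠ T.root) (hleaf : ∀ i ∈ S, T.parent i ≠ y) : T.IsSubtree (S.erase y) :=
  ⟨mem_erase.2 ⟨hy.symm, hS.1⟩, fun i hi =>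
    mem_erase.2 ⟨hleaf i (mem_of_mem_erase hi), hS.2 i (mem_of_mem_erase hi)⟩⟩

theorem IsSubtree.exists_mem_sdiff_isSubtree_erase [DecidableEq σ] {S R : Finset σ}
    (hS : T.IsSubtree S) (hR : T.IsSubtree R) (hSR : (S \ R).Nonempty) :
    ∃ y ∈ S \ R, T.IsSubtree (S.erase y) := by
  obtain ⟨y, hy, hdeepest⟩ := exists_max_image (S \ R) T.depth hSR
  have hyR : y ∉ R := (mem_sdiff.1 hy).2
  have hyroot : y ≠ T.root := fun h => hyR (h ▸ hR.1)
  refine ⟨y, hy, hS.erase hyroot fun i hi hiy => ?_⟩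
  have hiroot : i ≠ T.root := fun h => hyroot (by rw [← hiy, h, T.parent_root])
  have hiR : i ∉ R := fun h => hyR (hiy ▸ hR.2 i h)
  have := hdeepest i (mem_sdiff.2 ⟨hi, hiR⟩)
  rw [T.depth_node i hiroot, hiy] at this
  omega

theorem isSubtree_image_range [DecidableEq σ] {sel : ℕ → σ} (hsel0 : sel 0 = T.root)
    (havail : ∀ n, 0 < n → ∃ k < n, sel k = T.parent (sel n)) {N : ℕ} (hN : 0 < N) :
    T.IsSubtree ((range N).image sel) := by
  refine ⟨mem_image.2 ⟨0, mem_range.2 hN, hsel0⟩, fun i hi => ?_⟩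
  obtain ⟨m, hm, rfl⟩ := mem_image.1 hi
  rcases Nat.eq_zero_or_pos m with rfl | hm0
  · rw [hsel0, T.parent_root]
    exact mem_image.2 ⟨0, mem_range.2 hN, hsel0⟩
  · obtain ⟨k, hk, hke⟩ := havail m hm0
    exact mem_image.2 ⟨k, mem_range.2 (hk.trans (mem_range.1 hm)), hke⟩

theorem score_le_score_sel {sel : ℕ → σ} (hsel0 : sel 0 = T.root)
    (hmax : ∀ n, 0 < n → ∀ j, (∀ k < n, sel k ≠ j) → (∃ k < n, sel k = T.parent j) →
      T.score j ≤ T.score (sel n))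
    {n : ℕ} (hn : 0 < n) {j : σ} (hj : ∀ k < n, sel k ≠ j) : T.score j ≤ T.score (sel n) := by
  obtain ⟨a, ha, hpa, hja⟩ := T.exists_score_le_of_notMem (s := {x | ∃ k < n, sel k = x})
    ⟨0, hn, hsel0⟩ (fun ⟨k, hk, hkj⟩ => hj k hk hkj)
  exact hja.trans (hmax n hn a (fun k hk hka => ha ⟨k, hk, hka⟩) hpa)

theorem exists_sel_notMem_isSubtree_insert [DecidableEq σ] {sel : ℕ → σ}
    (hsel0 : sel 0 = T.root)
    (havail : ∀ n, 0 < n → ∃ k < n, sel k = T.parent (sel n))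
    (hmax : ∀ n, 0 < n → ∀ j, (∀ k < n, sel k ≠ j) → (∃ k < n, sel k = T.parent j) →
      T.score j ≤ T.score (sel n))
    {S : Finset σ} (hS : T.IsSubtree S) {m : ℕ} (hm : sel m ∉ S) :
    ∃ n ≤ m, sel n ∉ S ∧ T.IsSubtree (insert (sel n) S) ∧
      ∀ j ∉ S, T.score j ≤ T.score (sel n) := by
  classical
  have hex : ∃ n, sel n ∉ S := ⟨m, hm⟩
  have hbefore : ∀ k < Nat.find hex, sel k ∈ S := fun k hk => not_not.1 (Nat.find_min hex hk)
  have hpos : 0 < Nat.find hex :=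
    Nat.pos_of_ne_zero fun h => Nat.find_spec hex (h ▸ hsel0 ▸ hS.1)
  obtain ⟨k, hk, hkp⟩ := havail _ hpos
  refine ⟨_, Nat.find_min' hex hm, Nat.find_spec hex, hS.insert (hkp ▸ hbefore k hk),
    fun j hj => score_le_score_sel hsel0 hmax hpos fun k hk hkj => hj (hkj ▸ hbefore k hk)⟩

end ScoreTree

/-- Exchange step: if S and T* are prefix-closed subtrees of the same size N with
S ≠ T*, where T* consists of the first N nodes of a best-first enumeration, then
there is a prefix-closed subtree T' of size N whose score sum is at least that of S
and whose symmetric difference with T* is strictly smaller than that of S. -/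
theorem stmt9 {σ : Type} [DecidableEq σ] (T : ScoreTree σ) (sel : ℕ → σ)
    (hsel0 : sel 0 = T.root)
    (hinj : Function.Injective sel)
    (havail : ∀ n, 0 < n → ∃ k < n, sel k = T.parent (sel n))
    (hmax : ∀ n, 0 < n → ∀ j, (∀ k < n, sel k ≠ j) → (∃ k < n, sel k = T.parent j) →
      T.score j ≤ T.score (sel n))
    (N : ℕ) (S : Finset σ)
    (hroot : T.root ∈ S) (hclosed : ∀ i ∈ S, T.parent i ∈ S)
    (hcard : S.card = N) (hne : S ≠ (Finset.range N).image sel) :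
    ∃ T' : Finset σ, T.root ∈ T' ∧ (∀ i ∈ T', T.parent i ∈ T') ∧ T'.card = N ∧
      ∑ i ∈ S, T.score i ≤ ∑ i ∈ T', T.score i ∧
      ((T' \ (Finset.range N).image sel) ∪ ((Finset.range N).image sel \ T')).card
        < ((S \ (Finset.range N).image sel) ∪ ((Finset.range N).image sel \ S)).card := by
  have hS : T.IsSubtree S := ⟨hroot, hclosed⟩
  set R := (range N).image sel
  have hR : T.IsSubtree R :=
    ScoreTree.isSubtree_image_range hsel0 havail (hcard ▸ card_pos.2 ⟨_, hroot⟩)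
  have hRcard : #R = N := by rw [card_image_of_injective _ hinj, card_range]
  have hSR : (S \ R).Nonempty :=
    sdiff_nonempty.2 fun h => hne (eq_of_subset_of_card_le h (by omega))
  obtain ⟨y, hy, hS'⟩ := hS.exists_mem_sdiff_isSubtree_erase hR hSR
  obtain ⟨z, hzR, hzS⟩ : ∃ z ∈ R, z ∉ S :=
    not_subset.1 fun h => hne (eq_of_subset_of_card_le h (by omega)).symm
  obtain ⟨m, hm, rfl⟩ := mem_image.1 hzR
  obtain ⟨n, hnm, hn, hins, hscore⟩ := ScoreTree.exists_sel_notMem_isSubtree_insert hsel0 havail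
    hmax hS' (m := m) fun h => hzS (mem_of_mem_erase h)
  have hnR : sel n ∈ R := mem_image_of_mem _ (mem_range.2 (hnm.trans_lt (mem_range.1 hm)))
  have hnS : sel n ∉ S := fun h => hn (mem_erase.2 ⟨fun e => (mem_sdiff.1 hy).2 (e ▸ hnR), h⟩)
  refine ⟨_, hins.1, hins.2, ?_, ?_, card_insert_erase_symmDiff_lt hy (mem_sdiff.2 ⟨hnR, hnS⟩)⟩
  · rw [card_insert_of_notMem hn, card_erase_add_one (mem_sdiff.1 hy).1, hcard]
  · rw [sum_insert hn, ← add_sum_erase S _ (mem_sdiff.1 hy).1]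
    gcongr
    exact hscore y (notMem_erase y S)
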